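/- Let A, ε, ω ∈ ℝ and define the unsteady double-gyre velocity field v(x, y, t) = (−πA sin(π f(x,t)) cos(π y), πA cos(π f(x,t)) sin(π y)) with f(x,t) = ε sin(ω t) x² + (1 − 2ε sin(ω t)) x. If x : ℝ → ℝ² is differentiable, satisfies x′(t) = v(x(t), t) for all t ≥ t₀, and x(t₀) ∈ [0,2] × [0,1], then x(t) ∈ [0,2] × [0,1] for all t ≥ t₀; i.e., the closed rectangle [0,2] × [0,1] is positively invariant for passive drifters in the double gyre. -/

import Mathlib

open Real

private lemma dg_abs_sin_le (t : ℝ) : |Real.sin t| ≤ |t| := by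
  have key : ∀ s : ℝ, 0 ≤ s → |Real.sin s| ≤ s := by
    intro s hs
    rw [abs_le]
    refine ⟨?_, Real.sin_le hs⟩
    rcases le_total s 1 with h1 | h1
    · have hpi : s ≤ π := h1.trans (by linarith [Real.pi_gt_three])
      have : 0 ≤ Real.sin s := Real.sin_nonneg_of_nonneg_of_le_pi hs hpi
      linarith
    · linarith [Real.neg_one_le_sin s]
  rcases le_total 0 t with h | h
  · rw [abs_of_nonneg h]; exact key t h
  · rw [abs_of_nonpos h]
    have := key (-t) (by linarith)
    rwa [Real.sin_neg, abs_neg] at this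

private lemma dg_abs_sin_sub_sin (a b : ℝ) : |Real.sin a - Real.sin b| ≤ |a - b| := by
  rw [Real.sin_sub_sin, abs_mul, abs_mul, abs_two]
  have h1 := dg_abs_sin_le ((a - b) / 2)
  have h2 := Real.abs_cos_le_one ((a + b) / 2)
  have h3 : |(a - b) / 2| = |a - b| / 2 := by
    rw [abs_div, abs_two]
  have h4 : (0:ℝ) ≤ |Real.sin ((a - b) / 2)| := abs_nonneg _
  nlinarith [abs_nonneg (a - b)]

/-- Uniqueness against a constant solution: if a solution of a (locally-in-space
Lipschitz) scalar ODE equals the constant equilibrium `c` at time `a`, it stays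
equal to `c` afterwards. -/
private lemma dg_eq_const {F : ℝ → ℝ → ℝ} {g : ℝ → ℝ} {c a b : ℝ}
    (hgc : Continuous g)
    (hd : ∀ t, a ≤ t → HasDerivAt g (F t (g t)) t)
    (hc : ∀ t, F t c = 0)
    (hlip : ∀ L U : ℝ, ∃ K : NNReal, ∀ t, LipschitzOnWith K (F t) (Set.Icc L U))
    (hab : a ≤ b) (hga : g a = c) : g b = c := by
  obtain ⟨C, hC⟩ := (isCompact_Icc (a := a) (b := b)).exists_bound_of_continuousOn
    hgc.continuousOn
  set L : ℝ := min c (-(|C|)) with hL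
  set U : ℝ := max c |C| with hU
  obtain ⟨K, hK⟩ := hlip L U
  have hmem : ∀ t ∈ Set.Ico a b, g t ∈ Set.Icc L U := by
    intro t ht
    have h1 : ‖g t‖ ≤ C := hC t ⟨ht.1, ht.2.le⟩
    have h2 : |g t| ≤ |C| := le_trans h1 (le_abs_self C)
    rw [abs_le] at h2
    exact ⟨le_trans (min_le_right _ _) h2.1, le_trans h2.2 (le_max_right _ _)⟩
  have hcmem : ∀ t ∈ Set.Ico a b, c ∈ Set.Icc L U :=
    fun t _ => ⟨min_le_left _ _, le_max_left _ _⟩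
  have key := dist_le_of_trajectories_ODE_of_mem (v := F) (s := fun _ => Set.Icc L U)
    (K := K) (f := g) (g := fun _ => c) (a := a) (b := b) (δ := 0)
    (fun t _ => hK t)
    hgc.continuousOn
    (fun t ht => (hd t ht.1).hasDerivWithinAt)
    hmem
    continuousOn_const
    (fun t ht => by simpa [hc t] using (hasDerivWithinAt_const t (Set.Ici t) c))
    hcmem
    (by simp [hga])
  have := key b ⟨hab, le_rfl⟩
  simp only [zero_mul] at this
  have hd0 : dist (g b) c ≤ 0 := this
  exact dist_le_zero.mp hd0

/-- If `c ≤ g t₀` and `c` is an equilibrium, then `c ≤ g t` for all `t ≥ t₀`. -/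
private lemma dg_stay_ge {F : ℝ → ℝ → ℝ} {g : ℝ → ℝ} {c t₀ : ℝ}
    (hgc : Continuous g)
    (hd : ∀ t, t₀ ≤ t → HasDerivAt g (F t (g t)) t)
    (hc : ∀ t, F t c = 0)
    (hlip : ∀ L U : ℝ, ∃ K : NNReal, ∀ t, LipschitzOnWith K (F t) (Set.Icc L U))
    (h0 : c ≤ g t₀) : ∀ t, t₀ ≤ t → c ≤ g t := by
  intro t ht
  by_contra hlt
  push_neg at hlt
  have hmem : c ∈ Set.Icc (g t) (g t₀) := ⟨hlt.le, h0⟩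
  obtain ⟨r, hr, hgr⟩ := intermediate_value_Icc' ht hgc.continuousOn hmem
  have : g t = c :=
    dg_eq_const hgc (fun s hs => hd s (le_trans hr.1 hs)) hc hlip hr.2 hgr
  linarith

/-- If `g t₀ ≤ c` and `c` is an equilibrium, then `g t ≤ c` for all `t ≥ t₀`. -/
private lemma dg_stay_le {F : ℝ → ℝ → ℝ} {g : ℝ → ℝ} {c t₀ : ℝ}
    (hgc : Continuous g)
    (hd : ∀ t, t₀ ≤ t → HasDerivAt g (F t (g t)) t)
    (hc : ∀ t, F t c = 0)
    (hlip : ∀ L U : ℝ, ∃ K : NNReal, ∀ t, LipschitzOnWith K (F t) (Set.Icc L U))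
    (h0 : g t₀ ≤ c) : ∀ t, t₀ ≤ t → g t ≤ c := by
  intro t ht
  have key := dg_stay_ge (F := fun s u => -F s (-u)) (g := fun s => -(g s)) (c := -c)
    (t₀ := t₀) (hgc.neg)
    (fun s hs => by have := (hd s hs).neg; simp only [neg_neg]; exact this)
    (fun s => by simp [hc s])
    (fun L U => by
      obtain ⟨K, hK⟩ := hlip (-U) (-L)
      refine ⟨K, fun s => ?_⟩
      rw [lipschitzOnWith_iff_dist_le_mul]
      intro u hu v hv
      have hu' : -u ∈ Set.Icc (-U) (-L) := ⟨neg_le_neg hu.2, neg_le_neg hu.1⟩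
      have hv' : -v ∈ Set.Icc (-U) (-L) := ⟨neg_le_neg hv.2, neg_le_neg hv.1⟩
      have := (lipschitzOnWith_iff_dist_le_mul.mp (hK s)) (-u) hu' (-v) hv'
      calc dist (-F s (-u)) (-F s (-v)) = dist (F s (-u)) (F s (-v)) := dist_neg_neg _ _
        _ ≤ K * dist (-u) (-v) := this
        _ = K * dist u v := by rw [dist_neg_neg])
    (by show -c ≤ -(g t₀); linarith) t ht
  simpa using neg_le_neg key

/-- The closed rectangle `[0,2] × [0,1]` is positively invariant for passive
drifters in the unsteady double-gyre flow. -/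
theorem double_gyre_domain_positively_invariant
    (A ε ω t₀ : ℝ)
    (f : ℝ → ℝ → ℝ)
    (hf : ∀ a t, f a t = ε * Real.sin (ω * t) * a ^ 2 + (1 - 2 * ε * Real.sin (ω * t)) * a)
    (x y : ℝ → ℝ)
    (hdiff : Differentiable ℝ x ∧ Differentiable ℝ y)
    (hx : ∀ t : ℝ, t₀ ≤ t →
      HasDerivAt x (-(π * A) * Real.sin (π * f (x t) t) * Real.cos (π * y t)) t)
    (hy : ∀ t : ℝ, t₀ ≤ t →
      HasDerivAt y (π * A * Real.cos (π * f (x t) t) * Real.sin (π * y t)) t)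
    (h0 : x t₀ ∈ Set.Icc (0 : ℝ) 2 ∧ y t₀ ∈ Set.Icc (0 : ℝ) 1) :
    ∀ t : ℝ, t₀ ≤ t → x t ∈ Set.Icc (0 : ℝ) 2 ∧ y t ∈ Set.Icc (0 : ℝ) 1 := by
  have hxc : Continuous x := hdiff.1.continuous
  have hyc : Continuous y := hdiff.2.continuous
  -- the vector field for the y-component
  set Fy : ℝ → ℝ → ℝ := fun t u => π * A * Real.cos (π * f (x t) t) * Real.sin (π * u)
    with hFy
  -- the vector field for the x-component
  set Fx : ℝ → ℝ → ℝ := fun t u => -(π * A) * Real.sin (π * f u t) * Real.cos (π * y t)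
    with hFx
  have hdy : ∀ t, t₀ ≤ t → HasDerivAt y (Fy t (y t)) t := fun t ht => hy t ht
  have hdx : ∀ t, t₀ ≤ t → HasDerivAt x (Fx t (x t)) t := fun t ht => hx t ht
  -- Lipschitz for Fy (global, restricted to intervals)
  have hlipy : ∀ L U : ℝ, ∃ K : NNReal, ∀ t, LipschitzOnWith K (Fy t) (Set.Icc L U) := by
    intro L U
    refine ⟨(π ^ 2 * |A|).toNNReal, fun t => ?_⟩
    rw [lipschitzOnWith_iff_dist_le_mul]
    intro u hu v hv
    have hcoe : ((π ^ 2 * |A|).toNNReal : ℝ) = π ^ 2 * |A| :=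
      Real.coe_toNNReal _ (by positivity)
    rw [hcoe, Real.dist_eq, Real.dist_eq]
    have heq : Fy t u - Fy t v
        = π * A * Real.cos (π * f (x t) t) * (Real.sin (π * u) - Real.sin (π * v)) := by
      simp only [hFy]; ring
    rw [heq]
    have h1 : |Real.sin (π * u) - Real.sin (π * v)| ≤ π * |u - v| := by
      have := dg_abs_sin_sub_sin (π * u) (π * v)
      have h2 : |π * u - π * v| = π * |u - v| := by
        rw [← mul_sub, abs_mul, abs_of_nonneg Real.pi_pos.le]
      linarith
    have h2 : |π * A * Real.cos (π * f (x t) t)| ≤ π * |A| := by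
      rw [abs_mul, abs_mul, abs_of_nonneg Real.pi_pos.le]
      exact mul_le_of_le_one_right (by positivity) (Real.abs_cos_le_one _)
    calc |π * A * Real.cos (π * f (x t) t) * (Real.sin (π * u) - Real.sin (π * v))|
        = |π * A * Real.cos (π * f (x t) t)| * |Real.sin (π * u) - Real.sin (π * v)| :=
          abs_mul _ _
      _ ≤ (π * |A|) * (π * |u - v|) := by
          apply mul_le_mul h2 h1 (abs_nonneg _) (by positivity)
      _ = π ^ 2 * |A| * |u - v| := by ring
  -- Lipschitz for Fx on bounded intervals
  have hlipx : ∀ L U : ℝ, ∃ K : NNReal, ∀ t, LipschitzOnWith K (Fx t) (Set.Icc L U) := by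
    intro L U
    set C : ℝ := max |L| |U| with hC
    refine ⟨(π ^ 2 * |A| * (2 * |ε| * C + 1 + 2 * |ε|)).toNNReal, fun t => ?_⟩
    rw [lipschitzOnWith_iff_dist_le_mul]
    intro u hu v hv
    have hCnn : 0 ≤ C := le_trans (abs_nonneg L) (le_max_left _ _)
    have hcoe : ((π ^ 2 * |A| * (2 * |ε| * C + 1 + 2 * |ε|)).toNNReal : ℝ)
        = π ^ 2 * |A| * (2 * |ε| * C + 1 + 2 * |ε|) :=
      Real.coe_toNNReal _ (by positivity)
    rw [hcoe, Real.dist_eq, Real.dist_eq]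
    have hub : |u| ≤ C := by
      rw [abs_le]
      constructor
      · calc -C ≤ -|L| := neg_le_neg (le_max_left _ _)
          _ ≤ L := neg_abs_le L
          _ ≤ u := hu.1
      · calc u ≤ U := hu.2
          _ ≤ |U| := le_abs_self U
          _ ≤ C := le_max_right _ _
    have hvb : |v| ≤ C := by
      rw [abs_le]
      constructor
      · calc -C ≤ -|L| := neg_le_neg (le_max_left _ _)
          _ ≤ L := neg_abs_le L
          _ ≤ v := hv.1
      · calc v ≤ U := hv.2
          _ ≤ |U| := le_abs_self U
          _ ≤ C := le_max_right _ _
    -- bound on |f u t - f v t|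
    have hfdiff : |f u t - f v t| ≤ (2 * |ε| * C + 1 + 2 * |ε|) * |u - v| := by
      have h1 : f u t - f v t
          = (u - v) * (ε * Real.sin (ω * t) * (u + v) + (1 - 2 * ε * Real.sin (ω * t))) := by
        rw [hf, hf]; ring
      rw [h1, abs_mul, mul_comm]
      apply mul_le_mul_of_nonneg_right _ (abs_nonneg _)
      have hs := Real.abs_sin_le_one (ω * t)
      calc |ε * Real.sin (ω * t) * (u + v) + (1 - 2 * ε * Real.sin (ω * t))|
          ≤ |ε * Real.sin (ω * t) * (u + v)| + |1 - 2 * ε * Real.sin (ω * t)| := abs_add_le _ _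
        _ ≤ 2 * |ε| * C + (1 + 2 * |ε|) := by
            have ha : |ε * Real.sin (ω * t) * (u + v)| ≤ 2 * |ε| * C := by
              rw [abs_mul, abs_mul]
              have huv : |u + v| ≤ 2 * C := (abs_add_le u v).trans (by linarith)
              have e1 : |ε| * |Real.sin (ω * t)| ≤ |ε| :=
                mul_le_of_le_one_right (abs_nonneg ε) hs
              have e2 : |ε| * |Real.sin (ω * t)| * |u + v| ≤ |ε| * |u + v| :=
                mul_le_mul_of_nonneg_right e1 (abs_nonneg _)
              have e3 : |ε| * |u + v| ≤ |ε| * (2 * C) :=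
                mul_le_mul_of_nonneg_left huv (abs_nonneg ε)
              nlinarith
            have hb : |1 - 2 * ε * Real.sin (ω * t)| ≤ 1 + 2 * |ε| := by
              have h1 := abs_add_le (1 : ℝ) (-(2 * ε * Real.sin (ω * t)))
              rw [abs_neg] at h1
              have h2 : |2 * ε * Real.sin (ω * t)| ≤ 2 * |ε| := by
                rw [abs_mul, abs_mul, abs_two]
                nlinarith [abs_nonneg ε]
              have h3 : (1 : ℝ) - 2 * ε * Real.sin (ω * t)
                  = 1 + -(2 * ε * Real.sin (ω * t)) := by ring
              rw [h3]
              simp only [abs_one] at h1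
              linarith
            linarith
        _ = 2 * |ε| * C + 1 + 2 * |ε| := by ring
    have heq : Fx t u - Fx t v
        = -(π * A) * Real.cos (π * y t) * (Real.sin (π * f u t) - Real.sin (π * f v t)) := by
      simp only [hFx]; ring
    rw [heq]
    have h1 : |Real.sin (π * f u t) - Real.sin (π * f v t)|
        ≤ π * ((2 * |ε| * C + 1 + 2 * |ε|) * |u - v|) := by
      have ha := dg_abs_sin_sub_sin (π * f u t) (π * f v t)
      have hb : |π * f u t - π * f v t| = π * |f u t - f v t| := by
        rw [← mul_sub, abs_mul, abs_of_nonneg Real.pi_pos.le]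
      have hc2 : π * |f u t - f v t| ≤ π * ((2 * |ε| * C + 1 + 2 * |ε|) * |u - v|) :=
        mul_le_mul_of_nonneg_left hfdiff Real.pi_pos.le
      linarith
    have h2 : |(-(π * A)) * Real.cos (π * y t)| ≤ π * |A| := by
      rw [abs_mul, abs_neg, abs_mul, abs_of_nonneg Real.pi_pos.le]
      exact mul_le_of_le_one_right (by positivity) (Real.abs_cos_le_one _)
    calc |(-(π * A)) * Real.cos (π * y t) * (Real.sin (π * f u t) - Real.sin (π * f v t))|
        = |(-(π * A)) * Real.cos (π * y t)| * |Real.sin (π * f u t) - Real.sin (π * f v t)| :=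
          abs_mul _ _
      _ ≤ (π * |A|) * (π * ((2 * |ε| * C + 1 + 2 * |ε|) * |u - v|)) := by
          apply mul_le_mul h2 h1 (abs_nonneg _) (by positivity)
      _ = π ^ 2 * |A| * (2 * |ε| * C + 1 + 2 * |ε|) * |u - v| := by ring
  -- equilibria
  have hcy0 : ∀ t, Fy t (0 : ℝ) = 0 := by intro t; simp [hFy]
  have hcy1 : ∀ t, Fy t (1 : ℝ) = 0 := by intro t; simp [hFy]
  have hcx0 : ∀ t, Fx t (0 : ℝ) = 0 := by
    intro t
    have : f 0 t = 0 := by rw [hf]; ring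
    simp [hFx, this]
  have hcx2 : ∀ t, Fx t (2 : ℝ) = 0 := by
    intro t
    have hf2 : f 2 t = 2 := by rw [hf]; ring
    have : Real.sin (π * 2) = 0 := by
      rw [mul_comm]; exact Real.sin_int_mul_pi 2
    simp [hFx, hf2, this]
  intro t ht
  refine ⟨⟨?_, ?_⟩, ?_, ?_⟩
  · exact dg_stay_ge hxc hdx hcx0 hlipx h0.1.1 t ht
  · exact dg_stay_le hxc hdx hcx2 hlipx h0.1.2 t ht
  · exact dg_stay_ge hyc hdy hcy0 hlipy h0.2.1 t ht
  · exact dg_stay_le hyc hdy hcy1 hlipy h0.2.2 t ht
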